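/- arXiv:math/0603538 — 5 statements merged into one kernel-verified Lean document; each statement's English description precedes it below -/
import Mathlib

section
/- Let R be a surjective relation on a nonempty finite set W. Then for every pair (a₀, a₁) ∈ R there exists a bi-infinite sequence (aᵢ)_{i ∈ ℤ} in W extending (a₀, a₁) such that (aᵢ, aᵢ₊₁) ∈ R for all i ∈ ℤ, and the sequence is eventually periodic as i → +∞ and as i → −∞. -/
/-- A relation `R ⊆ W × W` is surjective when both coordinate projections
restricted to `R` are onto `W`. -/
def IsSurjRel {W : Type*} (R : Set (W × W)) : Prop :=
  (∀ a : W, ∃ b : W, (a, b) ∈ R) ∧ (∀ b : W, ∃ a : W, (a, b) ∈ R)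

lemma iter_evper_aux {W : Type*} (f : W → W) (x : W) (m n : ℕ) (hlt : m < n)
    (he : f^[m] x = f^[n] x) :
    ∃ m p : ℕ, 1 ≤ p ∧ ∀ k, m ≤ k → f^[k + p] x = f^[k] x := by
  refine ⟨m, n - m, by omega, fun k hk => ?_⟩
  have h1 : k + (n - m) = (k - m) + n := by omega
  have h2 : (k - m) + m = k := by omega
  rw [h1, Function.iterate_add_apply, ← he, ← Function.iterate_add_apply, h2]

lemma iter_evper {W : Type*} [Finite W] (f : W → W) (x : W) :
    ∃ m p : ℕ, 1 ≤ p ∧ ∀ k, m ≤ k → f^[k + p] x = f^[k] x := by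
  obtain ⟨m, n, hmn, he⟩ :=
    Finite.exists_ne_map_eq_of_infinite (fun k : ℕ => f^[k] x)
  have he : f^[m] x = f^[n] x := he
  rcases hmn.lt_or_gt with hlt | hlt
  · exact iter_evper_aux f x m n hlt he
  · exact iter_evper_aux f x n m hlt he.symm

theorem stmt_5 {W : Type*} [Finite W] [Nonempty W] (R : Set (W × W)) (hR : IsSurjRel R)
    (a₀ a₁ : W) (h : (a₀, a₁) ∈ R) :
    ∃ a : ℤ → W, a 0 = a₀ ∧ a 1 = a₁ ∧ (∀ i : ℤ, (a i, a (i + 1)) ∈ R) ∧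
      (∃ N p : ℤ, 1 ≤ p ∧ ∀ i : ℤ, N ≤ i → a (i + p) = a i) ∧
      (∃ N p : ℤ, 1 ≤ p ∧ ∀ i : ℤ, i ≤ N → a (i - p) = a i) := by
  obtain ⟨hf, hg⟩ := hR
  choose f hfR using hf
  choose g hgR using hg
  set a : ℤ → W := fun i => if 1 ≤ i then f^[(i - 1).toNat] a₁ else g^[(-i).toNat] a₀ with ha
  have hpos : ∀ i : ℤ, 1 ≤ i → a i = f^[(i - 1).toNat] a₁ := by
    intro i hi; simp [ha, hi]
  have hneg : ∀ i : ℤ, i ≤ 0 → a i = g^[(-i).toNat] a₀ := by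
    intro i hi; simp [ha, show ¬ (1 ≤ i) by omega]
  refine ⟨a, by simpa using hneg 0 le_rfl, by simpa using hpos 1 le_rfl, ?_, ?_, ?_⟩
  · intro i
    rcases le_or_gt 1 i with hi | hi
    · rw [hpos i hi, hpos (i + 1) (by omega),
        show (i + 1 - 1).toNat = (i - 1).toNat + 1 by omega,
        Function.iterate_succ_apply']
      exact hfR _
    · rcases eq_or_lt_of_le (show i ≤ 0 by omega) with hi0 | hi0
      · subst hi0
        rw [show (0:ℤ) + 1 = 1 from rfl, hneg 0 le_rfl, hpos 1 le_rfl]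
        simpa using h
      · rw [hneg i (by omega), hneg (i + 1) (by omega),
          show (-i).toNat = (-(i+1)).toNat + 1 by omega,
          Function.iterate_succ_apply']
        exact hgR _
  · obtain ⟨m, p, hp, hper⟩ := iter_evper f a₁
    refine ⟨(m : ℤ) + 1, (p : ℤ), by exact_mod_cast hp, fun i hi => ?_⟩
    rw [hpos i (by omega), hpos (i + p) (by omega),
      show (i + p - 1).toNat = (i - 1).toNat + p by omega]
    exact hper _ (by omega)
  · obtain ⟨m, p, hp, hper⟩ := iter_evper g a₀
    refine ⟨-(m : ℤ), (p : ℤ), by exact_mod_cast hp, fun i hi => ?_⟩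
    rw [hneg i (by omega), hneg (i - p) (by omega),
      show (-(i - p)).toNat = (-i).toNat + p by omega]
    exact hper _ (by omega)
end

section
/- Let W be a nonempty finite set and R a surjective relation on W. Then R can be covered by finitely many bi-infinite R-chains: there exist finitely many bi-infinite sequences, each of which is an R-chain eventually periodic at both ends, such that every pair (a,b) ∈ R occurs as a consecutive pair (aᵢ, aᵢ₊₁) in one of these chains. -/
namespace Function

variable {α : Type*}

theorem exists_isPeriodicPt_iterate [Finite α] (f : α → α) (x : α) :
    ∃ k p : ℕ, 0 < p ∧ IsPeriodicPt f p (f^[k] x) := by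
  obtain ⟨k, l, hkl, heq⟩ :=
    Set.finite_univ.exists_lt_map_eq_of_forall_mem (f := fun n : ℕ => f^[n] x)
      fun _ => Set.mem_univ _
  refine ⟨k, l - k, by omega, ?_⟩
  change f^[l - k] (f^[k] x) = f^[k] x
  rw [← iterate_add_apply, Nat.sub_add_cancel hkl.le]
  exact heq.symm

theorem iterate_add_eq_of_isPeriodicPt {f : α → α} {x : α} {k p : ℕ}
    (h : IsPeriodicPt f p (f^[k] x)) {n : ℕ} (hn : k ≤ n) :
    f^[n + p] x = f^[n] x := by
  obtain ⟨m, rfl⟩ := Nat.exists_eq_add_of_le hn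
  have := (h.apply_iterate m).eq
  rwa [← iterate_add_apply, ← iterate_add_apply, ← iterate_add_apply,
    show p + m + k = k + m + p by omega, Nat.add_comm m] at this

end Function

section OrbitChain

variable {α : Type*} (g f : α → α) (a b : α)

def orbitChain (i : ℤ) : α :=
  if i ≤ 0 then g^[(-i).toNat] a else f^[(i - 1).toNat] b

@[simp]
theorem orbitChain_zero : orbitChain g f a b 0 = a := rfl

@[simp]
theorem orbitChain_one : orbitChain g f a b 1 = b := rfl

theorem orbitChain_of_nonpos {i : ℤ} (hi : i ≤ 0) :
    orbitChain g f a b i = g^[(-i).toNat] a := if_pos hi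

theorem orbitChain_of_pos {i : ℤ} (hi : 0 < i) :
    orbitChain g f a b i = f^[(i - 1).toNat] b := if_neg (not_le.mpr hi)

theorem orbitChain_add_one_of_pos {i : ℤ} (hi : 0 < i) :
    orbitChain g f a b (i + 1) = f (orbitChain g f a b i) := by
  rw [orbitChain_of_pos _ _ _ _ hi, orbitChain_of_pos _ _ _ _ (by omega),
    show (i + 1 - 1).toNat = (i - 1).toNat + 1 by omega, Function.iterate_succ_apply']

theorem orbitChain_of_neg {i : ℤ} (hi : i < 0) :
    orbitChain g f a b i = g (orbitChain g f a b (i + 1)) := by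
  rw [orbitChain_of_nonpos _ _ _ _ hi.le, orbitChain_of_nonpos _ _ _ _ (by omega),
    show (-i).toNat = (-(i + 1)).toNat + 1 by omega, Function.iterate_succ_apply']

theorem orbitChain_swap (i : ℤ) : orbitChain g f a b i = orbitChain f g b a (1 - i) := by
  unfold orbitChain
  split_ifs <;> first | omega | congr 2; omega

theorem orbitChain_isChain {r : α → α → Prop} (hf : ∀ x, r x (f x)) (hg : ∀ x, r (g x) x)
    (hab : r a b) (i : ℤ) : r (orbitChain g f a b i) (orbitChain g f a b (i + 1)) := by
  rcases lt_trichotomy i 0 with hi | rfl | hi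
  · rw [orbitChain_of_neg _ _ _ _ hi]
    exact hg _
  · simpa using hab
  · rw [orbitChain_add_one_of_pos _ _ _ _ hi]
    exact hf _

variable [Finite α]

theorem orbitChain_eventually_periodic_atTop :
    ∃ N p : ℤ, 1 ≤ p ∧ ∀ i, N ≤ i → orbitChain g f a b (i + p) = orbitChain g f a b i := by
  obtain ⟨k, p, hp, hper⟩ := Function.exists_isPeriodicPt_iterate f b
  refine ⟨k + 1, p, by omega, fun i hi => ?_⟩
  rw [orbitChain_of_pos _ _ _ _ (by omega), orbitChain_of_pos _ _ _ _ (by omega),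
    show (i + p - 1).toNat = (i - 1).toNat + p by omega]
  exact Function.iterate_add_eq_of_isPeriodicPt hper (by omega)

theorem orbitChain_eventually_periodic_atBot :
    ∃ N p : ℤ, 1 ≤ p ∧ ∀ i, i ≤ N → orbitChain g f a b (i - p) = orbitChain g f a b i := by
  obtain ⟨N, p, hp, hper⟩ := orbitChain_eventually_periodic_atTop f g b a
  refine ⟨1 - N, p, hp, fun i hi => ?_⟩
  rw [orbitChain_swap, orbitChain_swap g, show 1 - (i - p) = 1 - i + p by ring]
  exact hper _ (by omega)

end OrbitChain

theorem stmt_6_general {W : Type*} [Finite W] (R : Set (W × W)) (hR : IsSurjRel R) :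
    ∃ (m : ℕ) (c : Fin m → ℤ → W),
      (∀ j : Fin m, ∀ i : ℤ, (c j i, c j (i + 1)) ∈ R) ∧
      (∀ j : Fin m, ∃ N p : ℤ, 1 ≤ p ∧ ∀ i : ℤ, N ≤ i → c j (i + p) = c j i) ∧
      (∀ j : Fin m, ∃ N p : ℤ, 1 ≤ p ∧ ∀ i : ℤ, i ≤ N → c j (i - p) = c j i) ∧
      (∀ q ∈ R, ∃ (j : Fin m) (i : ℤ), c j i = q.1 ∧ c j (i + 1) = q.2) := by
  obtain ⟨hsucc, hpred⟩ := hR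
  choose f hf using hsucc
  choose g hg using hpred
  let e := Finite.equivFin R
  refine ⟨Nat.card R, fun j => orbitChain g f (e.symm j).1.1 (e.symm j).1.2,
    fun j => orbitChain_isChain g f _ _ (r := fun x y => (x, y) ∈ R) hf hg (e.symm j).2,
    fun j => orbitChain_eventually_periodic_atTop g f _ _,
    fun j => orbitChain_eventually_periodic_atBot g f _ _,
    fun q hq => ⟨e ⟨q, hq⟩, 0, ?_⟩⟩
  simp only [Equiv.symm_apply_apply, zero_add, orbitChain_zero, orbitChain_one, and_self]

theorem stmt_6 {W : Type*} [Finite W] [Nonempty W] (R : Set (W × W)) (hR : IsSurjRel R) :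
    ∃ (m : ℕ) (c : Fin m → ℤ → W),
      (∀ j : Fin m, ∀ i : ℤ, (c j i, c j (i + 1)) ∈ R) ∧
      (∀ j : Fin m, ∃ N p : ℤ, 1 ≤ p ∧ ∀ i : ℤ, N ≤ i → c j (i + p) = c j i) ∧
      (∀ j : Fin m, ∃ N p : ℤ, 1 ≤ p ∧ ∀ i : ℤ, i ≤ N → c j (i - p) = c j i) ∧
      (∀ q ∈ R, ∃ (j : Fin m) (i : ℤ), c j i = q.1 ∧ c j (i + 1) = q.2) :=
  stmt_6_general R hR
end

section
/- Let X be a compact metric space, T : X → X a homeomorphism, W a finite set, R a surjective relation on W, and φ : X → W a continuous map. Then the set of homeomorphisms H[φ, R] = {T ∈ H(X) : (φ × φ)(graph of T) = R} is a clopen subset of the homeomorphism group H(X) with the uniform convergence topology. -/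
/-- The topology of uniform convergence on the homeomorphism group of a compact
metric space, obtained from the compact-open topology on `C(X, X)` (with which it
agrees) via the embedding `T ↦ (T, T⁻¹)`. -/
def homeoTop (X : Type*) [TopologicalSpace X] : TopologicalSpace (X ≃ₜ X) :=
  TopologicalSpace.induced
    (fun T : X ≃ₜ X => ((T : C(X, X)), (T.symm : C(X, X)))) inferInstance

/-! `T ↦ φ ∘ T` is continuous into `C(X, W)`, which is discrete because `X` is compact and `W`
discrete; so every condition on `φ ∘ T` alone, such as `(φ × φ)(T) = R`, cuts out a clopen set. -/

/-- `{g}` is the set of `f` mapping each of the finitely many fibres `g ⁻¹' {w}` into `{w}`,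
a finite intersection of compact-open subbasic sets. -/
theorem ContinuousMap.discreteTopology_of_compactSpace {X W : Type*} [TopologicalSpace X]
    [CompactSpace X] [TopologicalSpace W] [DiscreteTopology W] :
    DiscreteTopology C(X, W) := by
  rw [discreteTopology_iff_isOpen_singleton]
  intro g
  have hfin : (Set.range g).Finite := (isCompact_range g.continuous).finite_of_discrete
  have hg : ({g} : Set C(X, W)) =
      ⋂ w ∈ Set.range g, {f : C(X, W) | Set.MapsTo f (g ⁻¹' {w}) {w}} := by
    ext f
    simp only [Set.mem_singleton_iff, Set.mem_iInter, Set.mem_ofPred_eq]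
    constructor
    · rintro rfl w _ x hx
      exact hx
    · intro h
      ext x
      exact h (g x) ⟨x, rfl⟩ rfl
  rw [hg]
  exact hfin.isOpen_biInter fun w _ =>
    ContinuousMap.isOpen_setOfPred_mapsTo
      (isClosed_singleton.preimage g.continuous).isCompact (isOpen_discrete _)

theorem continuous_homeoTop_toContinuousMap (X : Type*) [TopologicalSpace X] :
    @Continuous (X ≃ₜ X) C(X, X) (homeoTop X) _ fun T => (T : C(X, X)) :=
  let := homeoTop X
  continuous_fst.comp
    (continuous_induced_dom (f := fun T : X ≃ₜ X => ((T : C(X, X)), (T.symm : C(X, X)))))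

theorem stmt_7_general {X : Type*} [MetricSpace X] [CompactSpace X]
    {W : Type*} [TopologicalSpace W] [DiscreteTopology W]
    (R : Set (W × W)) (φ : X → W) (hφ : Continuous φ) :
    @IsClopen (X ≃ₜ X) (homeoTop X)
      {T : X ≃ₜ X | Set.range (fun x : X => (φ x, φ (T x))) = R} := by
  let := homeoTop X
  have := ContinuousMap.discreteTopology_of_compactSpace (X := X) (W := W)
  have hcomp : Continuous fun T : X ≃ₜ X => (⟨φ, hφ⟩ : C(X, W)).comp (T : C(X, X)) :=
    (ContinuousMap.continuous_postcomp _).comp (continuous_homeoTop_toContinuousMap X)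
  exact (isClopen_discrete {f : C(X, W) | Set.range (fun x => (φ x, f x)) = R}).preimage hcomp

theorem stmt_7 {X : Type*} [MetricSpace X] [CompactSpace X]
    {W : Type*} [Finite W] [TopologicalSpace W] [DiscreteTopology W]
    (R : Set (W × W)) (hR : IsSurjRel R) (φ : X → W) (hφ : Continuous φ) :
    @IsClopen (X ≃ₜ X) (homeoTop X)
      {T : X ≃ₜ X | Set.range (fun x : X => (φ x, φ (T x))) = R} :=
  stmt_7_general R φ hφ
end

section
/- With notation as above, let (Σ, τ) be the spiral, and let (Σₙ, Rₙ) be the finite spiral of type n obtained as a quotient. For any continuous surjection φ : Σ → Σₙ mapping τ to the surjective relation Rₙ (i.e. (φ × φ)(τ) = Rₙ), the preimage of each wandering point of Σₙ (the points (x, Π(x)) with −n < x < n) is a single wandering point of Σ. -/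
/-- `ZMod n` carries the discrete topology. -/
instance (n : ℕ) : TopologicalSpace (ZMod n) := ⊥

instance (n : ℕ) : DiscreteTopology (ZMod n) := ⟨rfl⟩

/-- The two-point compactification `ℤ* = ℤ ∪ {+∞, -∞}` of the integers. -/
inductive Zstar where
  | int : ℤ → Zstar
  | pinf : Zstar
  | ninf : Zstar

/-- An order embedding of `ℤ*` into `ℝ` realizing the two-point
compactification topology. -/
noncomputable def Zstar.embed : Zstar → ℝ
  | .int n => (n : ℝ) / (1 + |(n : ℝ)|)
  | .pinf => 1
  | .ninf => -1

noncomputable instance : TopologicalSpace Zstar :=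
  TopologicalSpace.induced Zstar.embed inferInstance

/-- Translation by `1` on `ℤ*`, fixing the two points at infinity. -/
def Zstar.tau : Zstar → Zstar
  | .int n => .int (n + 1)
  | .pinf => .pinf
  | .ninf => .ninf

/-- The universal adding machine `Θ`, the inverse limit of the rings `ℤ/k!ℤ`. -/
abbrev Theta : Type :=
  {f : (k : ℕ) → ZMod (Nat.factorial k) //
    ∀ k : ℕ, ZMod.castHom (Nat.factorial_dvd_factorial (Nat.le_succ k))
      (ZMod (Nat.factorial k)) (f (k + 1)) = f k}

/-- Translation by the identity element on `Θ`. -/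
def Theta.tau (f : Theta) : Theta :=
  ⟨fun k => f.1 k + 1, fun k => by rw [map_add, map_one, f.2 k]⟩

/-- The canonical embedding `Π : ℤ → Θ`. -/
def Theta.Pi (n : ℤ) : Theta :=
  ⟨fun k => (n : ZMod (Nat.factorial k)), fun k => by simp⟩

theorem Theta.tau_Pi (n : ℤ) : Theta.tau (Theta.Pi n) = Theta.Pi (n + 1) := by
  apply Subtype.ext
  funext k
  show (n : ZMod (Nat.factorial k)) + 1 = ((n + 1 : ℤ) : ZMod (Nat.factorial k))
  push_cast
  ring

/-- The spiral `Σ ⊆ ℤ* × Θ`. -/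
def SpiralSet : Set (Zstar × Theta) :=
  {p | p.1 = .pinf ∨ p.1 = .ninf ∨ ∃ n : ℤ, p.1 = .int n ∧ p.2 = Theta.Pi n}

/-- The restriction of `τ × τ` to the spiral. -/
def Spiral.tau (p : ↥SpiralSet) : ↥SpiralSet :=
  ⟨(Zstar.tau (p : Zstar × Theta).1, Theta.tau (p : Zstar × Theta).2), by
    obtain ⟨⟨x, t⟩, hp⟩ := p
    show (Zstar.tau x, Theta.tau t) ∈ SpiralSet
    rcases hp with h | h | ⟨n, hx, ht⟩
    · replace h : x = Zstar.pinf := h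
      subst h; exact Or.inl rfl
    · replace h : x = Zstar.ninf := h
      subst h; exact Or.inr (Or.inl rfl)
    · replace hx : x = Zstar.int n := hx
      replace ht : t = Theta.Pi n := ht
      subst hx; subst ht
      exact Or.inr (Or.inr ⟨n + 1, rfl, Theta.tau_Pi n⟩)⟩

/-- The finite spiral of type `n`, realized inside `ℤ* × ℤ/n!ℤ`: the wandering
points `(x, x mod n!)` with `-n < x < n` together with the two period-`n!`
cycles at `±∞`. -/
def FinSpiral (n : ℕ) : Set (Zstar × ZMod (Nat.factorial n)) :=
  {p | p.1 = .pinf ∨ p.1 = .ninf ∨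
    ∃ x : ℤ, -(n : ℤ) < x ∧ x < n ∧ p.1 = .int x ∧ p.2 = (x : ZMod (Nat.factorial n))}

/-- The surjective relation `Rₙ` on the finite spiral of type `n`: the image of
the spiral translation under the quotient map `Σ → Σₙ`. -/
def FinRel (n : ℕ) :
    Set ((Zstar × ZMod (Nat.factorial n)) × (Zstar × ZMod (Nat.factorial n))) :=
  {q | (∃ t : ZMod (Nat.factorial n), q.1 = (.pinf, t) ∧ q.2 = (.pinf, t + 1)) ∨
       (∃ t : ZMod (Nat.factorial n), q.1 = (.ninf, t) ∧ q.2 = (.ninf, t + 1)) ∨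
       (∃ x : ℤ, -(n : ℤ) < x ∧ x + 1 < n ∧
          q.1 = (.int x, (x : ZMod (Nat.factorial n))) ∧
          q.2 = (.int (x + 1), ((x + 1 : ℤ) : ZMod (Nat.factorial n)))) ∨
       (1 ≤ n ∧ q.1 = (.int ((n : ℤ) - 1), (((n : ℤ) - 1 : ℤ) : ZMod (Nat.factorial n))) ∧
          q.2 = (.pinf, ((n : ℤ) : ZMod (Nat.factorial n)))) ∨
       (1 ≤ n ∧ q.1 = (.ninf, ((-(n : ℤ) : ℤ) : ZMod (Nat.factorial n))) ∧
          q.2 = (.int (-(n : ℤ) + 1), ((-(n : ℤ) + 1 : ℤ) : ZMod (Nat.factorial n))))}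

section Aux

/-! ### Relation step lemmas -/

lemma rel_pinf {n : ℕ} {a b : Zstar × ZMod n.factorial}
    (h : (a, b) ∈ FinRel n) (ha : a.1 = Zstar.pinf) : b.1 = Zstar.pinf := by
  rcases h with ⟨t, h1, h2⟩ | ⟨t, h1, h2⟩ | ⟨x, _, _, h1, h2⟩ | ⟨_, h1, h2⟩ | ⟨_, h1, h2⟩ <;>
    subst h1 <;> subst h2 <;> simp_all

lemma rel_int {n : ℕ} {a b : Zstar × ZMod n.factorial} {x : ℤ}
    (h : (a, b) ∈ FinRel n) (ha : a.1 = Zstar.int x) :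
    b.1 = Zstar.pinf ∨ (b.1 = Zstar.int (x + 1) ∧ x + 1 < n) := by
  rcases h with ⟨t, h1, h2⟩ | ⟨t, h1, h2⟩ | ⟨y, _, hy2, h1, h2⟩ | ⟨hn, h1, h2⟩ | ⟨_, h1, h2⟩ <;>
    subst h1 <;> subst h2 <;> simp_all

lemma rel_det {n : ℕ} {a b b' : Zstar × ZMod n.factorial}
    (h : (a, b) ∈ FinRel n) (h' : (a, b') ∈ FinRel n)
    (ha : a.1 ≠ Zstar.ninf) : b = b' := by
  rcases h with ⟨t, h1, h2⟩ | ⟨t, h1, h2⟩ | ⟨y, hy1, hy2, h1, h2⟩ | ⟨hn, h1, h2⟩ | ⟨hn, h1, h2⟩ <;>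
    rcases h' with ⟨t', g1, g2⟩ | ⟨t', g1, g2⟩ | ⟨y', hy1', hy2', g1, g2⟩ | ⟨hn', g1, g2⟩ |
      ⟨hn', g1, g2⟩ <;> subst h1 <;> subst h2 <;> subst g2 <;>
    simp_all <;> omega

/-! ### Chains -/

lemma chain_invariant {n : ℕ} (ψ : ℕ → Zstar × ZMod n.factorial)
    (hrel : ∀ k, (ψ k, ψ (k + 1)) ∈ FinRel n) {x : ℤ}
    (h0 : (ψ 0).1 = Zstar.int x) (hx : x < n) :
    ∀ k, (ψ k).1 = Zstar.pinf ∨ ((ψ k).1 = Zstar.int (x + k) ∧ x + k < n) := by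
  intro k
  induction k with
  | zero => exact Or.inr ⟨by simpa using h0, by simpa using hx⟩
  | succ k ih =>
    rcases ih with h | ⟨h, hlt⟩
    · exact Or.inl (rel_pinf (hrel k) h)
    · rcases rel_int (hrel k) h with h' | ⟨h', hlt'⟩
      · exact Or.inl h'
      · refine Or.inr ⟨?_, by push_cast; linarith⟩
        rw [h']; congr 1; push_cast; ring

lemma chain_eq {n : ℕ} (ψ ψ' : ℕ → Zstar × ZMod n.factorial)
    (hrel : ∀ k, (ψ k, ψ (k + 1)) ∈ FinRel n)
    (hrel' : ∀ k, (ψ' k, ψ' (k + 1)) ∈ FinRel n)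
    (h0 : ψ 0 = ψ' 0) (hni : ∀ k, (ψ k).1 ≠ Zstar.ninf) :
    ∀ k, ψ k = ψ' k := by
  intro k
  induction k with
  | zero => exact h0
  | succ k ih =>
    have h' := hrel' k
    rw [← ih] at h'
    exact rel_det (hrel k) h' (hni k)

end Aux
section Aux2

/-! ### Spiral points and iterates -/

def wpt (a : ℤ) : ↥SpiralSet :=
  ⟨(Zstar.int a, Theta.Pi a), Or.inr (Or.inr ⟨a, rfl, rfl⟩)⟩

lemma mem_int_eq_wpt (p : ↥SpiralSet) (m : ℤ)
    (h : (p : Zstar × Theta).1 = Zstar.int m) : p = wpt m := by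
  obtain ⟨⟨z, t⟩, hp⟩ := p
  simp only at h
  subst h
  apply Subtype.ext
  rcases hp with h1 | h1 | ⟨a, h1, h2⟩
  · exact absurd h1 (by simp)
  · exact absurd h1 (by simp)
  · replace h1 : Zstar.int m = Zstar.int a := h1
    cases Zstar.int.inj h1
    replace h2 : t = Theta.Pi m := h2
    subst h2
    rfl

lemma wpt_tau_iter (a : ℤ) (k : ℕ) : Spiral.tau^[k] (wpt a) = wpt (a + k) := by
  induction k with
  | zero => simp [wpt]
  | succ k ih =>
    rw [Function.iterate_succ_apply', ih]
    apply Subtype.ext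
    show (Zstar.tau (Zstar.int (a + k)), Theta.tau (Theta.Pi (a + k))) = _
    rw [Theta.tau_Pi]
    show (Zstar.int (a + k + 1), _) = (Zstar.int (a + (k + 1 : ℕ)), Theta.Pi (a + (k + 1 : ℕ)))
    push_cast
    norm_num [add_assoc]

/-- Subtracting a natural number in `Θ`. -/
def Theta.sub (t : Theta) (m : ℕ) : Theta :=
  ⟨fun k => t.1 k - m, fun k => by rw [map_sub, t.2 k]; simp⟩

lemma theta_tau_iter (s : Theta) (m : ℕ) (j : ℕ) :
    (Theta.tau^[m] s).1 j = s.1 j + m := by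
  induction m with
  | zero => simp
  | succ m ih =>
    rw [Function.iterate_succ_apply']
    show (Theta.tau^[m] s).1 j + 1 = _
    rw [ih]
    push_cast
    ring

lemma fixed_mem (z : Zstar) (hz : Zstar.tau z = z) (s : Theta) : (z, s) ∈ SpiralSet := by
  cases z with
  | int m => exfalso; simp only [Zstar.tau] at hz; have := Zstar.int.inj hz; omega
  | pinf => exact Or.inl rfl
  | ninf => exact Or.inr (Or.inl rfl)

lemma fixed_tau_iter (z : Zstar) (hz : Zstar.tau z = z) (s : Theta) (m : ℕ) :
    Spiral.tau^[m] ⟨(z, s), fixed_mem z hz s⟩ = ⟨(z, Theta.tau^[m] s), fixed_mem z hz _⟩ := by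
  induction m with
  | zero => simp
  | succ m ih =>
    rw [Function.iterate_succ_apply', ih, Function.iterate_succ_apply']
    apply Subtype.ext
    show (Zstar.tau z, Theta.tau (Theta.tau^[m] s)) = _
    rw [hz]

end Aux2
section Aux3

/-! ### Topology -/

lemma g_strictMono : StrictMono (fun r : ℝ => r / (1 + |r|)) := by
  intro a b hab
  have ha : (0:ℝ) < 1 + |a| := by positivity
  have hb : (0:ℝ) < 1 + |b| := by positivity
  simp only
  rw [div_lt_div_iff₀ ha hb]
  rcases abs_cases a with ⟨h1, h2⟩ | ⟨h1, h2⟩ <;> rcases abs_cases b with ⟨h3, h4⟩ | ⟨h3, h4⟩ <;>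
    nlinarith

lemma g_lt_one (r : ℝ) : r / (1 + |r|) < 1 := by
  have ha : (0:ℝ) < 1 + |r| := by positivity
  rw [div_lt_one ha]
  rcases abs_cases r with ⟨h1, h2⟩ | ⟨h1, h2⟩ <;> linarith

lemma neg_one_lt_g (r : ℝ) : -1 < r / (1 + |r|) := by
  have ha : (0:ℝ) < 1 + |r| := by positivity
  rw [lt_div_iff₀ ha]
  rcases abs_cases r with ⟨h1, h2⟩ | ⟨h1, h2⟩ <;> linarith

lemma isOpen_int_singleton (x : ℤ) : IsOpen {z : Zstar | z = Zstar.int x} := by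
  rw [isOpen_induced_iff]
  refine ⟨Set.Ioo (Zstar.embed (.int (x - 1))) (Zstar.embed (.int (x + 1))), isOpen_Ioo, ?_⟩
  ext z
  cases z with
  | int m =>
    simp only [Set.mem_preimage, Set.mem_Ioo, Set.mem_setOf_eq, Zstar.embed]
    constructor
    · rintro ⟨h1, h2⟩
      have h1' : (x : ℝ) - 1 < m := by
        have := g_strictMono.lt_iff_lt (a := ((x - 1 : ℤ) : ℝ)) (b := (m : ℝ))
        push_cast at this ⊢
        push_cast at h1
        rw [this] at h1
        linarith
      have h2' : (m : ℝ) < x + 1 := by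
        have := g_strictMono.lt_iff_lt (a := (m : ℝ)) (b := ((x + 1 : ℤ) : ℝ))
        push_cast at this ⊢
        push_cast at h2
        rw [this] at h2
        linarith
      have b1 : ((x - 1 : ℤ) : ℝ) < ((m : ℤ) : ℝ) := by push_cast; linarith
      have b2 : ((m : ℤ) : ℝ) < ((x + 1 : ℤ) : ℝ) := by push_cast; linarith
      rw [Int.cast_lt] at b1 b2
      have : m = x := by omega
      simp [this]
    · rintro h
      cases Zstar.int.inj h
      constructor
      · have := g_strictMono (show ((x - 1 : ℤ) : ℝ) < ((x : ℤ) : ℝ) by push_cast; linarith)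
        push_cast at this ⊢
        linarith
      · have := g_strictMono (show ((x : ℤ) : ℝ) < ((x + 1 : ℤ) : ℝ) by push_cast; linarith)
        push_cast at this ⊢
        linarith
  | pinf =>
    simp only [Set.mem_preimage, Set.mem_Ioo, Set.mem_setOf_eq, Zstar.embed]
    constructor
    · rintro ⟨-, h2⟩
      exact absurd h2 (not_lt.2 (g_lt_one _).le)
    · rintro h; exact absurd h (by simp)
  | ninf =>
    simp only [Set.mem_preimage, Set.mem_Ioo, Set.mem_setOf_eq, Zstar.embed]
    constructor
    · rintro ⟨h1, -⟩
      exact absurd h1 (not_lt.2 (neg_one_lt_g _).le)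
    · rintro h; exact absurd h (by simp)

end Aux3
section Aux4

lemma hrel_of_hR {n : ℕ} {φ : ↥SpiralSet → ↥(FinSpiral n)}
    (hR : Set.range (fun p : ↥SpiralSet =>
        ((φ p : Zstar × ZMod (Nat.factorial n)),
         (φ (Spiral.tau p) : Zstar × ZMod (Nat.factorial n)))) = FinRel n)
    (r : ↥SpiralSet) :
    ((φ r : Zstar × ZMod (Nat.factorial n)),
     (φ (Spiral.tau r) : Zstar × ZMod (Nat.factorial n))) ∈ FinRel n := by
  rw [← hR]; exact Set.mem_range_self r

lemma key_wandering {n : ℕ} (φ : ↥SpiralSet → ↥(FinSpiral n))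
    (hc : Continuous φ)
    (hR : Set.range (fun p : ↥SpiralSet =>
        ((φ p : Zstar × ZMod (Nat.factorial n)),
         (φ (Spiral.tau p) : Zstar × ZMod (Nat.factorial n)))) = FinRel n)
    (w : ↥(FinSpiral n)) {x : ℤ} (hx : x < n)
    (hwx : (w : Zstar × ZMod (Nat.factorial n)).1 = Zstar.int x)
    (p : ↥SpiralSet) (hp : φ p = w) :
    ∃ m : ℤ, (p : Zstar × Theta).1 = Zstar.int m := by
  obtain ⟨⟨z, t⟩, hmem⟩ := p
  by_contra hcon
  push_neg at hcon
  have hz : Zstar.tau z = z := by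
    cases z with
    | int m => exact absurd rfl (hcon m)
    | pinf => rfl
    | ninf => rfl
  -- the points `q k` approximate `p` from `k!` steps in the past
  set q : ℕ → ↥SpiralSet :=
    fun k => ⟨(z, Theta.sub t (Nat.factorial k)), fixed_mem z hz _⟩ with hqdef
  have hiter : ∀ k, Spiral.tau^[Nat.factorial k] (q k) = ⟨(z, t), hmem⟩ := by
    intro k
    rw [hqdef]
    simp only
    rw [fixed_tau_iter z hz]
    apply Subtype.ext
    simp only [Prod.mk.injEq, true_and]
    apply Subtype.ext
    funext j
    rw [theta_tau_iter]
    show t.1 j - (Nat.factorial k : ZMod (Nat.factorial j)) + _ = t.1 j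
    ring
  have hq : Filter.Tendsto q Filter.atTop (nhds (⟨(z, t), hmem⟩ : ↥SpiralSet)) := by
    rw [tendsto_subtype_rng]
    show Filter.Tendsto (fun k => (z, (Theta.sub t (Nat.factorial k) : Theta)))
      Filter.atTop (nhds (z, t))
    apply Filter.Tendsto.prodMk_nhds tendsto_const_nhds
    rw [tendsto_subtype_rng]
    rw [tendsto_pi_nhds]
    intro j
    refine Filter.Tendsto.congr' ?_ (tendsto_const_nhds (x := t.1 j))
    filter_upwards [Filter.eventually_ge_atTop j] with k hk
    haveI : NeZero (Nat.factorial j) := ⟨Nat.factorial_ne_zero j⟩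
    have h0 : ((Nat.factorial k : ℕ) : ZMod (Nat.factorial j)) = 0 :=
      (ZMod.natCast_eq_zero_iff _ _).2 (Nat.factorial_dvd_factorial hk)
    show t.1 j = t.1 j - _
    rw [h0, sub_zero]
  have hφq : Filter.Tendsto (fun k => φ (q k)) Filter.atTop (nhds w) := by
    have h2 := Filter.Tendsto.comp hc.continuousAt hq
    rw [hp] at h2
    exact h2
  have hUopen : IsOpen {u : ↥(FinSpiral n) |
      (u : Zstar × ZMod (Nat.factorial n)).1 = Zstar.int x} :=
    ((isOpen_int_singleton x).preimage continuous_fst).preimage continuous_subtype_val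
  have hev : ∀ᶠ k in Filter.atTop,
      ((φ (q k) : Zstar × ZMod (Nat.factorial n)).1 = Zstar.int x) :=
    hφq.eventually (hUopen.mem_nhds (by exact hwx))
  obtain ⟨k, hk1, hk2⟩ :=
    (hev.and (Filter.eventually_ge_atTop ((n - x).toNat + 1))).exists
  -- the forward chain from `φ (q k)`
  set ψ : ℕ → Zstar × ZMod (Nat.factorial n) :=
    fun j => (φ (Spiral.tau^[j] (q k)) : Zstar × ZMod (Nat.factorial n)) with hψ
  have hrel : ∀ j, (ψ j, ψ (j + 1)) ∈ FinRel n := by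
    intro j
    rw [hψ]
    simp only
    rw [Function.iterate_succ_apply']
    exact hrel_of_hR hR _
  have hinv := chain_invariant ψ hrel (x := x) (by simpa [hψ] using hk1) hx (Nat.factorial k)
  have hψk : ψ (Nat.factorial k) = (w : Zstar × ZMod (Nat.factorial n)) := by
    rw [hψ]; simp only; rw [hiter k, hp]
  rw [hψk, hwx] at hinv
  have hfac : ((n : ℤ) - x) + 1 ≤ (Nat.factorial k : ℤ) := by
    have h1 : (n - x).toNat + 1 ≤ Nat.factorial k :=
      le_trans hk2 (Nat.self_le_factorial k)
    have h2 : ((n - x).toNat : ℤ) = (n : ℤ) - x := Int.toNat_of_nonneg (by omega)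
    omega
  rcases hinv with h | ⟨h, hlt⟩
  · exact absurd h (by simp)
  · have := Zstar.int.inj h
    omega

end Aux4
section Aux5

lemma uniq_aux {n : ℕ} (φ : ↥SpiralSet → ↥(FinSpiral n))
    (hR : Set.range (fun p : ↥SpiralSet =>
        ((φ p : Zstar × ZMod (Nat.factorial n)),
         (φ (Spiral.tau p) : Zstar × ZMod (Nat.factorial n)))) = FinRel n)
    (w : ↥(FinSpiral n)) {x : ℤ} (hx : x < n)
    (hwx : (w : Zstar × ZMod (Nat.factorial n)).1 = Zstar.int x)
    {a b : ℤ} (hab : a < b) (ha : φ (wpt a) = w) (hb : φ (wpt b) = w) : False := by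
  set d := (b - a).toNat with hd
  have hd1 : 1 ≤ d := by omega
  have hwb : wpt b = Spiral.tau^[d] (wpt a) := by
    rw [wpt_tau_iter]
    congr 1
    omega
  set F : ℕ → Zstar × ZMod (Nat.factorial n) :=
    fun k => (φ (Spiral.tau^[k] (wpt a)) : Zstar × ZMod (Nat.factorial n)) with hF
  have hrel : ∀ k, (F k, F (k + 1)) ∈ FinRel n := by
    intro k
    rw [hF]
    simp only
    rw [Function.iterate_succ_apply']
    exact hrel_of_hR hR _
  have hF0 : F 0 = (w : Zstar × ZMod (Nat.factorial n)) := by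
    rw [hF]; simp only [Function.iterate_zero_apply, ha]
  have hinv := chain_invariant F hrel (x := x) (by rw [hF0]; exact hwx) hx
  have hni : ∀ k, (F k).1 ≠ Zstar.ninf := by
    intro k
    rcases hinv k with h | ⟨h, -⟩ <;> simp [h]
  have hFp : ∀ k, F k = F (k + d) := by
    refine chain_eq F (fun k => F (k + d)) hrel
      (fun k => by simpa [Nat.add_right_comm] using hrel (k + d)) ?_ hni
    rw [hF0]
    show _ = F (0 + d)
    rw [Nat.zero_add, hF]
    simp only
    rw [← hwb, hb]
  have hFm : ∀ m : ℕ, F (d * m) = F 0 := by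
    intro m
    induction m with
    | zero => rfl
    | succ m ih => rw [Nat.mul_succ, ← hFp (d * m), ih]
  set m := (n - x).toNat with hm
  have hmle : (n : ℤ) - x ≤ (d * m : ℕ) := by
    have h1 : m ≤ d * m := Nat.le_mul_of_pos_left m (by omega)
    have h2 : ((n - x).toNat : ℤ) = (n : ℤ) - x := Int.toNat_of_nonneg (by omega)
    omega
  have := hFm m
  rw [hF0] at this
  rcases hinv (d * m) with h | ⟨h, hlt⟩
  · rw [this, hwx] at h
    simp at h
  · rw [this, hwx] at h
    have := Zstar.int.inj h
    omega

end Aux5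

theorem stmt_17 (n : ℕ) (φ : ↥SpiralSet → ↥(FinSpiral n))
    (hc : Continuous φ) (hs : Function.Surjective φ)
    (hR : Set.range (fun p : ↥SpiralSet =>
        ((φ p : Zstar × ZMod (Nat.factorial n)),
         (φ (Spiral.tau p) : Zstar × ZMod (Nat.factorial n)))) = FinRel n) :
    ∀ w : ↥(FinSpiral n),
      (∃ x : ℤ, -(n : ℤ) < x ∧ x < n ∧
        (w : Zstar × ZMod (Nat.factorial n)).1 = .int x) →
      ∃ p : ↥SpiralSet, (∃ m : ℤ, (p : Zstar × Theta).1 = .int m) ∧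
        φ p = w ∧ ∀ q : ↥SpiralSet, φ q = w → q = p := by
  intro w hw
  obtain ⟨x, hx1, hx2, hwx⟩ := hw
  obtain ⟨p, hp⟩ := hs w
  obtain ⟨m, hm⟩ := key_wandering φ hc hR w hx2 hwx p hp
  refine ⟨p, ⟨m, hm⟩, hp, ?_⟩
  intro q hq
  obtain ⟨m', hm'⟩ := key_wandering φ hc hR w hx2 hwx q hq
  have hpw := mem_int_eq_wpt p m hm
  have hqw := mem_int_eq_wpt q m' hm'
  subst hpw
  subst hqw
  rcases lt_trichotomy m' m with h | h | h
  · exact (uniq_aux φ hR w hx2 hwx h hq hp).elim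
  · rw [h]
  · exact (uniq_aux φ hR w hx2 hwx h hp hq).elim
end

section
/- Let K be the group of all permutations a of ℕ such that, for some n, a preserves each block J_i of a fixed partition 𝒥 = {J_i} for all i > n (where the J_i are finite sets of strictly increasing cardinality partitioning ℕ), topologized as the increasing union of the compact groups Kₙ = S^n × S_{n+1} × S_{n+2} × ⋯. Suppose a ∈ K contains a copy of every finite permutation: for every n and every permutation π of J¹∪⋯∪Jⁿ there exist k and an injection β : J¹∪⋯∪Jⁿ → J_{n+k} with β ∘ π = a ∘ β on J¹∪⋯∪Jⁿ. Then the conjugacy class of a is dense in K. In particular K has the Rohlin property (a dense conjugacy class). -/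
/-!
Every basic open set around `c ∈ K` contains, for `L` large, the set of elements of `K_L` that
agree with `c` on `Jᴸ`. Let `π` be `c` restricted to `Jᴸ`. By hypothesis `a` contains a copy
`β` of `π` on a later block `J (L + k)`; conjugating `a` by the involution that exchanges `Jᴸ`
with `β '' Jᴸ` yields an element that agrees with `π` on `Jᴸ` and with `a` on the rest of the
blocks beyond `L`, so it lies in that set.
-/

open Set Function

namespace Equiv.Perm

variable {α : Type*}

theorem mem_of_apply_mem_of_mapsTo {s : Set α} (hs : s.Finite) {e : Perm α}
    (he : MapsTo e s s) {x : α} (hx : e x ∈ s) : x ∈ s := by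
  rw [← ((hs.injOn_iff_bijOn_of_mapsTo he).1 e.injective.injOn).image_eq] at hx
  exact e.injective.mem_set_image.1 hx

theorem exists_eqOn_of_mapsTo {s : Set α} (hs : s.Finite) {e : Perm α} (he : MapsTo e s s) :
    ∃ π : Perm α, EqOn π e s ∧ ∀ x ∉ s, π x = x := by
  classical
  have hiff : ∀ x, e x ∈ s ↔ x ∈ s := fun x => ⟨mem_of_apply_mem_of_mapsTo hs he, (he ·)⟩
  exact ⟨ofSubtype (e.subtypePerm hiff), fun x hx => ofSubtype_apply_of_mem _ hx,
    fun x hx => ofSubtype_apply_of_not_mem _ hx⟩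

theorem conj_apply_of_notMem {s : Set α} (hs : s.Finite) {a b : Perm α}
    (hb : ∀ x ∉ s, b x = x) (ha : MapsTo a s s) {x : α} (hx : x ∉ s) :
    (b * a * b⁻¹) x = a x := by
  have hbx : b⁻¹ x = x := inv_eq_iff_eq.2 (hb x hx).symm
  have hax : a x ∉ s := fun h => hx (mem_of_apply_mem_of_mapsTo hs ha h)
  rw [mul_apply, mul_apply, hbx, hb _ hax]

end Equiv.Perm

section SwapAlong

variable {α : Type*} [Nonempty α] {s : Set α} {β : α → α}

open Classical in
noncomputable def swapAlong (s : Set α) (β : α → α) (x : α) : α :=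
  if x ∈ s then β x else if x ∈ β '' s then invFunOn β s x else x

theorem swapAlong_of_mem {x : α} (hx : x ∈ s) : swapAlong s β x = β x := if_pos hx

theorem swapAlong_image (hinj : InjOn β s) (hdisj : Disjoint s (β '' s)) {x : α} (hx : x ∈ s) :
    swapAlong s β (β x) = x := by
  have hβx : β x ∈ β '' s := mem_image_of_mem β hx
  rw [swapAlong, if_neg (hdisj.notMem_of_mem_right hβx), if_pos hβx]
  exact hinj.leftInvOn_invFunOn hx

theorem swapAlong_of_notMem {x : α} (h₁ : x ∉ s) (h₂ : x ∉ β '' s) : swapAlong s β x = x := by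
  rw [swapAlong, if_neg h₁, if_neg h₂]

theorem swapAlong_involutive (hinj : InjOn β s) (hdisj : Disjoint s (β '' s)) :
    Involutive (swapAlong s β) := by
  intro x
  by_cases h₁ : x ∈ s
  · rw [swapAlong_of_mem h₁, swapAlong_image hinj hdisj h₁]
  by_cases h₂ : x ∈ β '' s
  · obtain ⟨y, hy, rfl⟩ := h₂
    rw [swapAlong_image hinj hdisj hy, swapAlong_of_mem hy]
  · rw [swapAlong_of_notMem h₁ h₂, swapAlong_of_notMem h₁ h₂]

noncomputable def swapAlongPerm (hinj : InjOn β s) (hdisj : Disjoint s (β '' s)) :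
    Equiv.Perm α :=
  (swapAlong_involutive hinj hdisj).toPerm

variable (hinj : InjOn β s) (hdisj : Disjoint s (β '' s))

@[simp]
theorem coe_swapAlongPerm : ⇑(swapAlongPerm hinj hdisj) = swapAlong s β := rfl

@[simp]
theorem swapAlongPerm_inv : (swapAlongPerm hinj hdisj)⁻¹ = swapAlongPerm hinj hdisj :=
  Involutive.toPerm_symm _

theorem conj_swapAlongPerm_apply_of_mem {a : Equiv.Perm α} {π : α → α} {x : α} (hx : x ∈ s)
    (hπx : π x ∈ s) (h : β (π x) = a (β x)) :
    (swapAlongPerm hinj hdisj * a * (swapAlongPerm hinj hdisj)⁻¹) x = π x := by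
  simp only [swapAlongPerm_inv, Equiv.Perm.mul_apply, coe_swapAlongPerm, swapAlong_of_mem hx,
    ← h, swapAlong_image hinj hdisj hπx]

theorem conj_swapAlongPerm_apply_image {a : Equiv.Perm α} {x : α} (hx : x ∈ s) (hax : a x ∈ s) :
    (swapAlongPerm hinj hdisj * a * (swapAlongPerm hinj hdisj)⁻¹) (β x) = β (a x) := by
  simp only [swapAlongPerm_inv, Equiv.Perm.mul_apply, coe_swapAlongPerm,
    swapAlong_image hinj hdisj hx, swapAlong_of_mem hax]

end SwapAlong

def blockUnion (J : ℕ → Finset ℕ) (n : ℕ) : Finset ℕ := (Finset.range (n + 1)).biUnion J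

def PreservesBlocksAbove (J : ℕ → Finset ℕ) (n : ℕ) (e : Equiv.Perm ℕ) : Prop :=
  ∀ i, n < i → ∀ m ∈ J i, e m ∈ J i

/-- The basic clopen set `K(π)`, as a set of permutations of `ℕ`. -/
def basicSet (J : ℕ → Finset ℕ) (n : ℕ) (π : Equiv.Perm ℕ) : Set (Equiv.Perm ℕ) :=
  {e | PreservesBlocksAbove J n e ∧ ∀ m ∈ blockUnion J n, e m = π m}

def ContainsCopyOf (J : ℕ → Finset ℕ) (a : Equiv.Perm ℕ) (n : ℕ) (π : Equiv.Perm ℕ) : Prop :=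
  ∃ (k : ℕ) (β : ℕ → ℕ), 0 < k ∧ InjOn β (blockUnion J n : Set ℕ) ∧
    (∀ m ∈ blockUnion J n, β m ∈ J (n + k)) ∧ ∀ m ∈ blockUnion J n, β (π m) = a (β m)

section Blocks

variable {J : ℕ → Finset ℕ} {m n L : ℕ}

theorem mem_blockUnion : m ∈ blockUnion J n ↔ ∃ i ≤ n, m ∈ J i := by
  simp [blockUnion]

theorem blockUnion_mono (hnL : n ≤ L) : blockUnion J n ⊆ blockUnion J L := fun m hm => by
  obtain ⟨i, hi, hm⟩ := mem_blockUnion.1 hm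
  exact mem_blockUnion.2 ⟨i, hi.trans hnL, hm⟩

theorem notMem_blockUnion (hpart : ∀ m : ℕ, ∃! i, m ∈ J i) {i : ℕ} (hi : n < i) (hm : m ∈ J i) :
    m ∉ blockUnion J n := fun h => by
  obtain ⟨j, hj, hmj⟩ := mem_blockUnion.1 h
  have := (hpart m).unique hm hmj
  omega

theorem PreservesBlocksAbove.mono {e : Equiv.Perm ℕ} (h : PreservesBlocksAbove J n e)
    (hnL : n ≤ L) : PreservesBlocksAbove J L e :=
  fun i hi => h i (hnL.trans_lt hi)

theorem PreservesBlocksAbove.mapsTo_blockUnion (hpart : ∀ m : ℕ, ∃! i, m ∈ J i)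
    {e : Equiv.Perm ℕ} (h : PreservesBlocksAbove J L e) :
    MapsTo e (blockUnion J L : Set ℕ) (blockUnion J L) := by
  intro m hm
  obtain ⟨j, hj, -⟩ := hpart (e m)
  by_contra hem
  have hLj : L < j := by
    by_contra! hjL
    exact hem (mem_blockUnion.2 ⟨j, hjL, hj⟩)
  exact notMem_blockUnion hpart hLj
    (Equiv.Perm.mem_of_apply_mem_of_mapsTo (J j).finite_toSet (h j hLj) hj) hm

theorem basicSet_subset {c π : Equiv.Perm ℕ} (hc : c ∈ basicSet J n π) (hnL : n ≤ L) :
    basicSet J L c ⊆ basicSet J n π := by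
  rintro d ⟨hdL, hdc⟩
  refine ⟨fun i hi m hm => ?_, fun m hm => ?_⟩
  · rcases lt_or_ge L i with hLi | hiL
    · exact hdL i hLi m hm
    · rw [hdc m (mem_blockUnion.2 ⟨i, hiL, hm⟩)]
      exact hc.1 i hi m hm
  · rw [hdc m (blockUnion_mono hnL hm), hc.2 m hm]

end Blocks

section Conjugation

variable {J : ℕ → Finset ℕ} {L : ℕ}

theorem exists_conj_mem_basicSet_of_copy (hpart : ∀ m : ℕ, ∃! i, m ∈ J i) {a π : Equiv.Perm ℕ}
    (ha : PreservesBlocksAbove J L a) (hπ : MapsTo π (blockUnion J L : Set ℕ) (blockUnion J L))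
    (hcopy : ContainsCopyOf J a L π) :
    ∃ b : Equiv.Perm ℕ, (∃ n, PreservesBlocksAbove J n b) ∧ b * a * b⁻¹ ∈ basicSet J L π := by
  obtain ⟨k, β, hk, hinj, hβJ, hβ⟩ := hcopy
  set A : Set ℕ := ↑(blockUnion J L)
  have hBJ : ∀ m ∈ β '' A, m ∈ J (L + k) := by
    rintro _ ⟨x, hx, rfl⟩
    exact hβJ x hx
  have hdisj : Disjoint A (β '' A) := Set.disjoint_right.2 fun m hm =>
    notMem_blockUnion hpart (by omega) (hBJ m hm)
  have hF : MapsTo a (A ∪ β '' A) (A ∪ β '' A) := by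
    have haA := ha.mapsTo_blockUnion hpart
    rintro m (hm | ⟨x, hx, rfl⟩)
    · exact Or.inl (haA hm)
    · exact Or.inr ⟨π x, hπ hx, hβ x hx⟩
  have hbF : ∀ m ∉ A ∪ β '' A, swapAlongPerm hinj hdisj m = m := fun m hm =>
    swapAlong_of_notMem (fun h => hm (Or.inl h)) (fun h => hm (Or.inr h))
  have hnotF : ∀ i, L + k < i → ∀ m ∈ J i, m ∉ A ∪ β '' A := by
    rintro i hi m hm (hmA | hmB)
    · exact notMem_blockUnion hpart (by omega) hm hmA
    · have := (hpart m).unique hm (hBJ m hmB)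
      omega
  refine ⟨swapAlongPerm hinj hdisj, ⟨L + k, fun i hi m hm => ?_⟩, fun i hi m hm => ?_,
    fun m hm => conj_swapAlongPerm_apply_of_mem hinj hdisj hm (hπ hm) (hβ m hm)⟩
  · rwa [hbF m (hnotF i hi m hm)]
  · by_cases hmB : m ∈ β '' A
    · obtain ⟨x, hx, rfl⟩ := hmB
      have hax : a x ∈ A := ha.mapsTo_blockUnion hpart hx
      rw [conj_swapAlongPerm_apply_image hinj hdisj hx hax, (hpart _).unique hm (hβJ x hx)]
      exact hβJ _ hax
    · have hmA : m ∉ A := notMem_blockUnion hpart hi hm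
      rw [Equiv.Perm.conj_apply_of_notMem ((A.toFinite).union ((A.toFinite).image β)) hbF hF
        (by rintro (h | h) <;> contradiction)]
      exact ha i hi m hm

theorem exists_conj_mem_basicSet (hpart : ∀ m : ℕ, ∃! i, m ∈ J i) {a c : Equiv.Perm ℕ}
    (ha : PreservesBlocksAbove J L a) (hc : PreservesBlocksAbove J L c)
    (hcopy : ∀ π : Equiv.Perm ℕ, (∀ m ∉ blockUnion J L, π m = m) → ContainsCopyOf J a L π) :
    ∃ b : Equiv.Perm ℕ, (∃ n, PreservesBlocksAbove J n b) ∧ b * a * b⁻¹ ∈ basicSet J L c := by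
  have hcA := hc.mapsTo_blockUnion hpart
  obtain ⟨π, hπc, hπ⟩ := Equiv.Perm.exists_eqOn_of_mapsTo (blockUnion J L).finite_toSet hcA
  have hπA : MapsTo π (blockUnion J L : Set ℕ) (blockUnion J L) := fun m hm => by
    rw [hπc hm]
    exact hcA hm
  obtain ⟨b, hb, hd, hdπ⟩ := exists_conj_mem_basicSet_of_copy hpart ha hπA (hcopy π hπ)
  exact ⟨b, hb, hd, fun m hm => (hdπ m hm).trans (hπc hm)⟩

end Conjugation

theorem stmt_19_general (J : ℕ → Finset ℕ)
    (hpart : ∀ m : ℕ, ∃! i, m ∈ J i)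
    -- `K` is the group of permutations of `ℕ` preserving all blocks `J i`
    -- beyond some `n`, i.e. `K = ⋃ₙ Kₙ` with `Kₙ = Sⁿ × S_{n+1} × S_{n+2} × ⋯`.
    (K : Set (Equiv.Perm ℕ))
    (hK : K = {a : Equiv.Perm ℕ | ∃ n : ℕ, ∀ i : ℕ, n < i → ∀ m ∈ J i, a m ∈ J i})
    -- the inductive topology on `K`, generated by its basic clopen sets `K(π)`,
    -- for `π` a permutation of `Jⁿ = J 0 ∪ ⋯ ∪ J n` (fixing everything else):
    -- `K(π) = {a ∈ Kₙ : a` agrees with `π` on `Jⁿ}`.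
    (t : TopologicalSpace ↥K)
    (ht : t = TopologicalSpace.generateFrom
      {S : Set ↥K | ∃ (n : ℕ) (π : Equiv.Perm ℕ),
        (∀ m ∉ (Finset.range (n + 1)).biUnion J, π m = m) ∧
        S = {a : ↥K | (∀ i : ℕ, n < i → ∀ m ∈ J i, (a : Equiv.Perm ℕ) m ∈ J i) ∧
          ∀ m ∈ (Finset.range (n + 1)).biUnion J, (a : Equiv.Perm ℕ) m = π m}})
    (a : Equiv.Perm ℕ) (ha : a ∈ K)
    -- `a` contains a copy of every finite permutation `π ∈ Sⁿ`:
    (hcopy : ∀ (n : ℕ) (π : Equiv.Perm ℕ),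
      (∀ m ∉ (Finset.range (n + 1)).biUnion J, π m = m) →
      ∃ (k : ℕ) (β : ℕ → ℕ), 0 < k ∧
        Set.InjOn β ((Finset.range (n + 1)).biUnion J : Set ℕ) ∧
        (∀ m ∈ (Finset.range (n + 1)).biUnion J, β m ∈ J (n + k)) ∧
        (∀ m ∈ (Finset.range (n + 1)).biUnion J, β (π m) = a (β m))) :
    -- then the conjugacy class of `a` in `K` is dense in `K`.
    @Dense ↥K t {c : ↥K | ∃ b ∈ K, (c : Equiv.Perm ℕ) = b * a * b⁻¹} := by
  subst hK
  rw [(TopologicalSpace.isTopologicalBasis_of_subbasis ht).dense_iff]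
  rintro _ ⟨f, ⟨hfin, hsub⟩, rfl⟩ ⟨c, hc⟩
  choose! n π _ hS using fun S (hSf : S ∈ f) => hsub hSf
  obtain ⟨L₀, hL₀⟩ := (hfin.image n).bddAbove
  obtain ⟨na, hna⟩ := ha
  obtain ⟨nc, hnc⟩ := c.2
  set L := max L₀ (max na nc)
  obtain ⟨b, hb, hdL, hdc⟩ := exists_conj_mem_basicSet (L := L) hpart
    (PreservesBlocksAbove.mono hna (by omega)) (PreservesBlocksAbove.mono hnc (by omega))
    (hcopy L)
  refine ⟨⟨b * a * b⁻¹, L, hdL⟩, fun S hSf => ?_, b, hb, rfl⟩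
  have hcS : c.1 ∈ basicSet J (n S) (π S) := by
    have := hc S hSf
    rwa [hS S hSf] at this
  rw [hS S hSf]
  exact basicSet_subset hcS (le_trans (hL₀ (mem_image_of_mem n hSf)) (le_max_left _ _)) ⟨hdL, hdc⟩

theorem stmt_19 (J : ℕ → Finset ℕ) (hne : ∀ i, (J i).Nonempty)
    (hcard : StrictMono fun i => (J i).card)
    (hpart : ∀ m : ℕ, ∃! i, m ∈ J i)
    -- `K` is the group of permutations of `ℕ` preserving all blocks `J i`
    -- beyond some `n`, i.e. `K = ⋃ₙ Kₙ` with `Kₙ = Sⁿ × S_{n+1} × S_{n+2} × ⋯`.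
    (K : Set (Equiv.Perm ℕ))
    (hK : K = {a : Equiv.Perm ℕ | ∃ n : ℕ, ∀ i : ℕ, n < i → ∀ m ∈ J i, a m ∈ J i})
    -- the inductive topology on `K`, generated by its basic clopen sets `K(π)`,
    -- for `π` a permutation of `Jⁿ = J 0 ∪ ⋯ ∪ J n` (fixing everything else):
    -- `K(π) = {a ∈ Kₙ : a` agrees with `π` on `Jⁿ}`.
    (t : TopologicalSpace ↥K)
    (ht : t = TopologicalSpace.generateFrom
      {S : Set ↥K | ∃ (n : ℕ) (π : Equiv.Perm ℕ),
        (∀ m ∉ (Finset.range (n + 1)).biUnion J, π m = m) ∧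
        S = {a : ↥K | (∀ i : ℕ, n < i → ∀ m ∈ J i, (a : Equiv.Perm ℕ) m ∈ J i) ∧
          ∀ m ∈ (Finset.range (n + 1)).biUnion J, (a : Equiv.Perm ℕ) m = π m}})
    (a : Equiv.Perm ℕ) (ha : a ∈ K)
    -- `a` contains a copy of every finite permutation `π ∈ Sⁿ`:
    (hcopy : ∀ (n : ℕ) (π : Equiv.Perm ℕ),
      (∀ m ∉ (Finset.range (n + 1)).biUnion J, π m = m) →
      ∃ (k : ℕ) (β : ℕ → ℕ), 0 < k ∧
        Set.InjOn β ((Finset.range (n + 1)).biUnion J : Set ℕ) ∧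
        (∀ m ∈ (Finset.range (n + 1)).biUnion J, β m ∈ J (n + k)) ∧
        (∀ m ∈ (Finset.range (n + 1)).biUnion J, β (π m) = a (β m))) :
    -- then the conjugacy class of `a` in `K` is dense in `K`.
    @Dense ↥K t {c : ↥K | ∃ b ∈ K, (c : Equiv.Perm ℕ) = b * a * b⁻¹} :=
  stmt_19_general J hpart K hK t ht a ha hcopy
end
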